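/- arXiv:0812.4353 — 4 statements merged into one kernel-verified Lean document; each statement's English description precedes it below -/
import Mathlib

section
/- For any u ∈ [0,1] and any finite family x₁,...,xₙ ∈ [0,1], one has 1 - ∏ᵢ(1 - u·xᵢ) ≥ u·(1 - ∏ᵢ(1 - xᵢ)). -/
/-! Induct on the factors. Writing `P = ∏ (1 - xᵢ)`, adding a factor `a` turns the defect
`(1 - ∏ (1 - u xᵢ)) - u (1 - P)` into `(1 - u a)` times the old defect plus `u a (1 - u) (1 - P)`,
and both terms are nonnegative. -/

open Finset

variable {R ι : Type*} [CommRing R] [LinearOrder R] [IsStrictOrderedRing R]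

theorem mul_one_sub_one_sub_mul_le_of_le {u a P Q : R} (hu0 : 0 ≤ u) (hu1 : u ≤ 1)
    (ha0 : 0 ≤ a) (ha1 : a ≤ 1) (hP : P ≤ 1) (hQ : u * (1 - P) ≤ 1 - Q) :
    u * (1 - (1 - a) * P) ≤ 1 - (1 - u * a) * Q := by
  have hua : 0 ≤ 1 - u * a := sub_nonneg.2 (mul_le_one₀ hu1 ha0 ha1)
  have hua' : 0 ≤ u * a * (1 - u) := mul_nonneg (mul_nonneg hu0 ha0) (sub_nonneg.2 hu1)
  nlinarith [mul_nonneg hua (sub_nonneg.2 hQ), mul_nonneg hua' (sub_nonneg.2 hP)]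

theorem mul_one_sub_prod_one_sub_le (s : Finset ι) {u : R} (hu0 : 0 ≤ u) (hu1 : u ≤ 1)
    {x : ι → R} (hx0 : ∀ i ∈ s, 0 ≤ x i) (hx1 : ∀ i ∈ s, x i ≤ 1) :
    u * (1 - ∏ i ∈ s, (1 - x i)) ≤ 1 - ∏ i ∈ s, (1 - u * x i) := by
  classical
  induction s using Finset.induction_on with
  | empty => simp
  | insert j s hj ih =>
    simp only [Finset.mem_insert, forall_eq_or_imp] at hx0 hx1
    rw [prod_insert hj, prod_insert hj]
    refine mul_one_sub_one_sub_mul_le_of_le hu0 hu1 hx0.1 hx1.1 ?_ (ih hx0.2 hx1.2)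
    exact prod_le_one (fun i hi => sub_nonneg.2 (hx1.2 i hi))
      (fun i hi => sub_le_self 1 (hx0.2 i hi))

theorem one_sub_prod_one_sub_mul_ge_general
    (n : ℕ) (u : ℝ) (hu : u ∈ Set.Icc (0:ℝ) 1)
    (x : Fin n → ℝ) (hx : ∀ i, x i ∈ Set.Icc (0:ℝ) 1) :
    u * (1 - ∏ i, (1 - x i)) ≤ 1 - ∏ i, (1 - u * x i) :=
  mul_one_sub_prod_one_sub_le univ hu.1 hu.2 (fun i _ => (hx i).1) (fun i _ => (hx i).2)

theorem one_sub_prod_one_sub_mul_ge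
    (n : ℕ) (hn : 1 ≤ n) (u : ℝ) (hu : u ∈ Set.Icc (0:ℝ) 1)
    (x : Fin n → ℝ) (hx : ∀ i, x i ∈ Set.Icc (0:ℝ) 1) :
    u * (1 - ∏ i, (1 - x i)) ≤ 1 - ∏ i, (1 - u * x i) :=
  one_sub_prod_one_sub_mul_ge_general n u hu x hx
end

section
/- Let κ : [0,∞) → [0,1] be non-decreasing and concave with κ(0) ≥ 0, and let x₁,...,xₙ ∈ S₂ ⊆ [0,∞) with n ≥ 1. Then the function u ↦ 1 - ∏ᵢ(1 - κ(xᵢ·u)) is non-decreasing and concave on [0,∞). -/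
open Set

section

variable {ι 𝕜 : Type*} [CommRing 𝕜] [LinearOrder 𝕜] [IsStrictOrderedRing 𝕜]
  {f : ι → 𝕜 → 𝕜} {s : Set 𝕜}

theorem AntitoneOn.finsetProd_of_nonneg (t : Finset ι) (hf : ∀ i ∈ t, AntitoneOn (f i) s)
    (hf₀ : ∀ i ∈ t, ∀ x ∈ s, 0 ≤ f i x) : AntitoneOn (fun x ↦ ∏ i ∈ t, f i x) s :=
  fun _ hx _ hy hxy ↦
    Finset.prod_le_prod (fun i hi ↦ hf₀ i hi _ hy) fun i hi ↦ hf i hi hx hy hxy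

theorem ConvexOn.finsetProd_of_antitoneOn (t : Finset ι) (hs : Convex 𝕜 s)
    (hf : ∀ i ∈ t, ConvexOn 𝕜 s (f i)) (hf_anti : ∀ i ∈ t, AntitoneOn (f i) s)
    (hf₀ : ∀ i ∈ t, ∀ x ∈ s, 0 ≤ f i x) : ConvexOn 𝕜 s (fun x ↦ ∏ i ∈ t, f i x) := by
  classical
  induction t using Finset.induction_on with
  | empty => simpa using convexOn_const (1 : 𝕜) hs
  | @insert a t ha ih =>
    simp only [Finset.forall_mem_insert] at hf hf_anti hf₀
    have hprod_anti := AntitoneOn.finsetProd_of_nonneg t hf_anti.2 hf₀.2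
    have hprod₀ : ∀ x ∈ s, 0 ≤ ∏ i ∈ t, f i x := fun x hx ↦
      Finset.prod_nonneg fun i hi ↦ hf₀.2 i hi x hx
    simp_rw [Finset.prod_insert ha]
    -- two antitone factors monovary, which is what `ConvexOn.mul` needs
    exact hf.1.mul (ih hf.2 hf_anti.2 hf₀.2) hf₀.1 hprod₀ (hf_anti.1.monovaryOn hprod_anti)

variable {κ : 𝕜 → 𝕜} {c : 𝕜}

theorem MonotoneOn.comp_mul_left_Ici (hκ : MonotoneOn κ (Ici 0)) (hc : 0 ≤ c) :
    MonotoneOn (fun u ↦ κ (c * u)) (Ici 0) :=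
  fun _ hu _ hv huv ↦ hκ (mul_nonneg hc hu) (mul_nonneg hc hv) (mul_le_mul_of_nonneg_left huv hc)

theorem ConcaveOn.comp_mul_left_Ici (hκ : ConcaveOn 𝕜 (Ici 0) κ) (hc : 0 ≤ c) :
    ConcaveOn 𝕜 (Ici 0) (fun u ↦ κ (c * u)) :=
  (hκ.comp_linearMap (LinearMap.mul 𝕜 𝕜 c)).subset
    (fun _ hu ↦ mul_nonneg hc hu) (convex_Ici 0)

end

theorem one_sub_prod_one_sub_kappa_monotone_concave_general
    (κ : ℝ → ℝ)
    (hκmono : MonotoneOn κ (Set.Ici 0))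
    (hκconc : ConcaveOn ℝ (Set.Ici 0) κ)
    (hκval : ∀ z ∈ Set.Ici (0:ℝ), κ z ∈ Set.Icc (0:ℝ) 1)
    (n : ℕ) (x : Fin n → ℝ) (hx : ∀ i, 0 ≤ x i) :
    MonotoneOn (fun u => 1 - ∏ i, (1 - κ (x i * u))) (Set.Ici 0) ∧
      ConcaveOn ℝ (Set.Ici 0) (fun u => 1 - ∏ i, (1 - κ (x i * u))) := by
  have hfactor_anti : ∀ i ∈ Finset.univ, AntitoneOn (fun u ↦ 1 - κ (x i * u)) (Ici 0) :=
    fun i _ _ hu _ hv huv ↦ sub_le_sub_left ((hκmono.comp_mul_left_Ici (hx i)) hu hv huv) 1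
  have hfactor_convex : ∀ i ∈ Finset.univ, ConvexOn ℝ (Ici 0) (fun u ↦ 1 - κ (x i * u)) :=
    fun i _ ↦ (convexOn_const 1 (convex_Ici 0)).sub (hκconc.comp_mul_left_Ici (hx i))
  have hfactor₀ : ∀ i ∈ Finset.univ, ∀ u ∈ Ici (0:ℝ), 0 ≤ 1 - κ (x i * u) :=
    fun i _ u hu ↦ sub_nonneg.2 (hκval _ (mul_nonneg (hx i) hu)).2
  have hprod_anti := AntitoneOn.finsetProd_of_nonneg Finset.univ hfactor_anti hfactor₀
  have hprod_convex := ConvexOn.finsetProd_of_antitoneOn Finset.univ (convex_Ici 0)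
    hfactor_convex hfactor_anti hfactor₀
  exact ⟨fun _ hu _ hv huv ↦ sub_le_sub_left (hprod_anti hu hv huv) 1,
    (concaveOn_const 1 (convex_Ici 0)).sub hprod_convex⟩

theorem one_sub_prod_one_sub_kappa_monotone_concave
    (κ : ℝ → ℝ)
    (hκmono : MonotoneOn κ (Set.Ici 0))
    (hκconc : ConcaveOn ℝ (Set.Ici 0) κ)
    (hκval : ∀ z ∈ Set.Ici (0:ℝ), κ z ∈ Set.Icc (0:ℝ) 1)
    (n : ℕ) (hn : 1 ≤ n) (x : Fin n → ℝ) (hx : ∀ i, 0 ≤ x i) :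
    MonotoneOn (fun u => 1 - ∏ i, (1 - κ (x i * u))) (Set.Ici 0) ∧
      ConcaveOn ℝ (Set.Ici 0) (fun u => 1 - ∏ i, (1 - κ (x i * u))) :=
  one_sub_prod_one_sub_kappa_monotone_concave_general κ hκmono hκconc hκval n x hx
end

section
/- Let κ : [0,∞) → [0,1] be non-decreasing and concave, let W̄ be a [0,∞)-valued random variable, and let y₁,...,yₘ ≥ 0 with m ≥ 1. Then E[∏ⱼ(1 - κ(yⱼ·W̄))] ≥ ∏ⱼ(1 - κ(yⱼ·E[W̄])); in particular, if W̄* ≥ E[W̄] then E[∏ⱼ(1 - κ(yⱼ·W̄))] ≥ ∏ⱼ(1 - κ(yⱼ·W̄*)). -/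
open Finset MeasureTheory Set

/-!
The map `u ↦ ∏ⱼ (1 - κ (yⱼ u))` is convex and antitone on `[0, ∞)`: each factor is, and a product
of nonnegative antitone convex functions is convex because the factors vary together. Jensen's
inequality then gives the first bound and monotonicity the second. Jensen is needed without
continuity, since a concave `κ` may jump at `0`: a positive mean is interior to `[0, ∞)`, where
the right derivative gives a supporting line, and a zero mean forces `W̄ = 0` almost surely.
-/

lemma ConvexOn.add_rightDeriv_mul_sub_le {S : Set ℝ} {g : ℝ → ℝ} {x y : ℝ}
    (hg : ConvexOn ℝ S g) (hx : x ∈ interior S) (hy : y ∈ S) :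
    g x + derivWithin g (Ioi x) x * (y - x) ≤ g y := by
  rcases lt_trichotomy y x with hyx | rfl | hxy
  · have hslope := (hg.slope_le_leftDeriv_of_mem_interior hy hx hyx).trans
      (hg.leftDeriv_le_rightDeriv_of_mem_interior hx)
    rw [slope_def_field, div_le_iff₀ (sub_pos.2 hyx)] at hslope
    linarith
  · simp
  · have hslope := hg.rightDeriv_le_slope_of_mem_interior hx hy hxy
    rw [slope_def_field, le_div_iff₀ (sub_pos.2 hxy)] at hslope
    linarith

section Jensen

variable {Ω : Type*} [MeasurableSpace Ω] {μ : Measure Ω} [IsProbabilityMeasure μ] {f : Ω → ℝ}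
  {g : ℝ → ℝ}

lemma ConvexOn.map_integral_le_of_integral_mem_interior {S : Set ℝ} (hg : ConvexOn ℝ S g)
    (hfS : ∀ᵐ ω ∂μ, f ω ∈ S) (hfi : Integrable f μ) (hgi : Integrable (fun ω => g (f ω)) μ)
    (hmean : ∫ ω, f ω ∂μ ∈ interior S) :
    g (∫ ω, f ω ∂μ) ≤ ∫ ω, g (f ω) ∂μ := by
  set a := ∫ ω, f ω ∂μ
  set c := derivWithin g (Ioi a) a
  have hline : Integrable (fun ω => c * (f ω - a)) μ := (hfi.sub (integrable_const a)).const_mul c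
  calc g a = ∫ ω, (g a + c * (f ω - a)) ∂μ := by
        rw [integral_add (integrable_const _) hline, integral_const_mul,
          integral_sub hfi (integrable_const a)]
        simp [a]
    _ ≤ ∫ ω, g (f ω) ∂μ :=
        integral_mono_ae ((integrable_const _).add hline) hgi
          (hfS.mono fun ω hω => hg.add_rightDeriv_mul_sub_le hmean hω)

lemma ConvexOn.map_integral_le_of_nonneg (hg : ConvexOn ℝ (Ici 0) g) (hf0 : 0 ≤ᵐ[μ] f)
    (hfi : Integrable f μ) (hgi : Integrable (fun ω => g (f ω)) μ) :
    g (∫ ω, f ω ∂μ) ≤ ∫ ω, g (f ω) ∂μ := by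
  rcases (integral_nonneg_of_ae hf0).eq_or_lt with hzero | hpos
  · have hf_ae : f =ᵐ[μ] 0 := (integral_eq_zero_iff_of_nonneg_ae hf0 hfi).1 hzero.symm
    have hgf_ae : (fun ω => g (f ω)) =ᵐ[μ] fun _ => g 0 := hf_ae.fun_comp g
    simp [← hzero, integral_congr_ae hgf_ae]
  · exact hg.map_integral_le_of_integral_mem_interior hf0 hfi hgi (by simpa using hpos)

end Jensen

lemma ConvexOn.finsetProd_of_antitoneOn_s8 {ι 𝕜 : Type*} [Field 𝕜] [LinearOrder 𝕜]
    [IsStrictOrderedRing 𝕜] {s : Finset ι} {u : Set 𝕜} {f : ι → 𝕜 → 𝕜} (hu : Convex 𝕜 u)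
    (hconv : ∀ i ∈ s, ConvexOn 𝕜 u (f i)) (hanti : ∀ i ∈ s, AntitoneOn (f i) u)
    (hf0 : ∀ i ∈ s, ∀ x ∈ u, 0 ≤ f i x) :
    ConvexOn 𝕜 u (fun x => ∏ i ∈ s, f i x) := by
  induction s using Finset.cons_induction with
  | empty => simpa using convexOn_const (1 : 𝕜) hu
  | cons i s his ih =>
    simp only [forall_mem_cons] at hconv hanti hf0
    simp only [prod_cons]
    exact hconv.1.mul (ih hconv.2 hanti.2 hf0.2) hf0.1
      (fun x hx => prod_nonneg fun j hj => hf0.2 j hj x hx)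
      (hanti.1.monovaryOn (AntitoneOn.finsetProd hanti.2 hf0.2))

lemma ConcaveOn.comp_const_mul_Ici {κ : ℝ → ℝ} {c : ℝ} (hκ : ConcaveOn ℝ (Ici 0) κ) (hc : 0 ≤ c) :
    ConcaveOn ℝ (Ici 0) (fun u => κ (c * u)) :=
  (hκ.comp_linearMap (LinearMap.mul ℝ ℝ c)).subset
    (fun u (hu : 0 ≤ u) => show 0 ≤ c * u from mul_nonneg hc hu) (convex_Ici 0)

theorem jensen_prod_one_sub_kappa_general
    {Ω : Type*} [MeasurableSpace Ω] (μ : Measure Ω) [IsProbabilityMeasure μ]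
    (κ : ℝ → ℝ)
    (hκmono : MonotoneOn κ (Set.Ici 0))
    (hκconc : ConcaveOn ℝ (Set.Ici 0) κ)
    (hκval : ∀ z ∈ Set.Ici (0:ℝ), κ z ∈ Set.Icc (0:ℝ) 1)
    (Wbar : Ω → ℝ) (hWbar0 : ∀ ω, 0 ≤ Wbar ω) (hWbarint : Integrable Wbar μ)
    (m : ℕ) (y : Fin m → ℝ) (hy : ∀ j, 0 ≤ y j)
    (hint : Integrable (fun ω => ∏ j, (1 - κ (y j * Wbar ω))) μ)
    (Wbarstar : ℝ) (hWbs : ∫ ω, Wbar ω ∂μ ≤ Wbarstar) :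
    (∏ j, (1 - κ (y j * ∫ ω, Wbar ω ∂μ)) ≤ ∫ ω, ∏ j, (1 - κ (y j * Wbar ω)) ∂μ) ∧
      ∏ j, (1 - κ (y j * Wbarstar)) ≤ ∫ ω, ∏ j, (1 - κ (y j * Wbar ω)) ∂μ := by
  have hconv : ∀ j ∈ Finset.univ, ConvexOn ℝ (Ici 0) (fun u => 1 - κ (y j * u)) := fun j _ =>
    (convexOn_const 1 (convex_Ici 0)).sub (hκconc.comp_const_mul_Ici (hy j))
  have hanti : ∀ j ∈ Finset.univ, AntitoneOn (fun u => 1 - κ (y j * u)) (Ici 0) :=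
    fun j _ u hu v hv huv => sub_le_sub_left (hκmono (mul_nonneg (hy j) hu)
      (mul_nonneg (hy j) hv) (mul_le_mul_of_nonneg_left huv (hy j))) 1
  have hnonneg : ∀ j ∈ Finset.univ, ∀ u ∈ Ici (0 : ℝ), 0 ≤ 1 - κ (y j * u) := fun j _ u hu =>
    sub_nonneg.2 (hκval _ (mul_nonneg (hy j) hu)).2
  have hjensen := (ConvexOn.finsetProd_of_antitoneOn_s8 (convex_Ici 0) hconv hanti
    hnonneg).map_integral_le_of_nonneg (ae_of_all _ hWbar0) hWbarint hint
  have hmean_nonneg : 0 ≤ ∫ ω, Wbar ω ∂μ := integral_nonneg hWbar0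
  exact ⟨hjensen, (AntitoneOn.finsetProd hanti hnonneg hmean_nonneg
    (hmean_nonneg.trans hWbs) hWbs).trans hjensen⟩

theorem jensen_prod_one_sub_kappa
    {Ω : Type*} [MeasurableSpace Ω] (μ : Measure Ω) [IsProbabilityMeasure μ]
    (κ : ℝ → ℝ)
    (hκmono : MonotoneOn κ (Set.Ici 0))
    (hκconc : ConcaveOn ℝ (Set.Ici 0) κ)
    (hκval : ∀ z ∈ Set.Ici (0:ℝ), κ z ∈ Set.Icc (0:ℝ) 1)
    (Wbar : Ω → ℝ) (hWbar0 : ∀ ω, 0 ≤ Wbar ω) (hWbarint : Integrable Wbar μ)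
    (m : ℕ) (hm : 1 ≤ m) (y : Fin m → ℝ) (hy : ∀ j, 0 ≤ y j)
    (hint : Integrable (fun ω => ∏ j, (1 - κ (y j * Wbar ω))) μ)
    (Wbarstar : ℝ) (hWbs : ∫ ω, Wbar ω ∂μ ≤ Wbarstar) :
    (∏ j, (1 - κ (y j * ∫ ω, Wbar ω ∂μ)) ≤ ∫ ω, ∏ j, (1 - κ (y j * Wbar ω)) ∂μ) ∧
      ∏ j, (1 - κ (y j * Wbarstar)) ≤ ∫ ω, ∏ j, (1 - κ (y j * Wbar ω)) ∂μ :=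
  jensen_prod_one_sub_kappa_general μ κ hκmono hκconc hκval Wbar hWbar0 hWbarint m y hy hint
    Wbarstar hWbs
end

section
/- Let κ : [0,∞) → [0,1] be non-decreasing and concave, (W, W̄) a random vector in [0,∞)², and W*, W̄* ≥ 0 with E[W] ≤ W*, E[W̄] ≤ W̄*, E[W·W̄] ≤ W*·W̄*. Then for any x₁,...,xₙ ≥ 0 and y₁,...,yₘ ≥ 0 with n, m ≥ 1: E[(1 - ∏ᵢ(1 - κ(W·xᵢ)))·(1 - ∏ⱼ(1 - κ(W̄·yⱼ)))] ≤ (1 - ∏ᵢ(1 - κ(W*·xᵢ)))·(1 - ∏ⱼ(1 - κ(W̄*·yⱼ))). -/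
/-!
Each factor `u ↦ 1 - ∏ᵢ (1 - κ (u xᵢ))` is concave and non-decreasing on `[0, ∞)`, since a product
of nonnegative, non-increasing convex functions is convex. A concave non-decreasing function lies
below a supporting line `a + b u` at `W*` with `a, b ≥ 0`, so the integrand is bounded by
`(a + b W)(ā + b̄ W̄)`, whose expectation is a nonnegative combination of `1`, `E W`, `E W̄` and
`E[W W̄]`, hence at most `(a + b W*)(ā + b̄ W̄*)`.
-/

open Finset MeasureTheory

theorem ConvexOn.prod_of_antitoneOn {ι 𝕜 : Type*} [Field 𝕜] [LinearOrder 𝕜] [IsStrictOrderedRing 𝕜]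
    {D : Set 𝕜} (hD : Convex 𝕜 D) {f : ι → 𝕜 → 𝕜} (s : Finset ι)
    (hconv : ∀ i ∈ s, ConvexOn 𝕜 D (f i)) (hanti : ∀ i ∈ s, AntitoneOn (f i) D)
    (hnonneg : ∀ i ∈ s, ∀ u ∈ D, 0 ≤ f i u) :
    ConvexOn 𝕜 D (fun u => ∏ i ∈ s, f i u) ∧ AntitoneOn (fun u => ∏ i ∈ s, f i u) D := by
  induction s using Finset.cons_induction with
  | empty => exact ⟨convexOn_const 1 hD, antitoneOn_const⟩
  | cons j s _ ih =>
    simp only [forall_mem_cons] at hconv hanti hnonneg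
    obtain ⟨hconv_s, hanti_s⟩ := ih hconv.2 hanti.2 hnonneg.2
    have hprod_nonneg : ∀ u ∈ D, 0 ≤ ∏ i ∈ s, f i u :=
      fun u hu => prod_nonneg fun i hi => hnonneg.2 i hi u hu
    simp only [prod_cons]
    exact ⟨hconv.1.mul hconv_s hnonneg.1 hprod_nonneg (hanti.1.monovaryOn hanti_s),
      fun u hu v hv huv => mul_le_mul (hanti.1 hu hv huv) (hanti_s hu hv huv)
        (hprod_nonneg v hv) (hnonneg.1 u hu)⟩

theorem concaveOn_and_monotoneOn_one_sub_prod_one_sub {ι : Type*} [Fintype ι] {κ : ℝ → ℝ}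
    (hκmono : MonotoneOn κ (Set.Ici 0)) (hκconc : ConcaveOn ℝ (Set.Ici 0) κ)
    (hκle : ∀ z ∈ Set.Ici (0:ℝ), κ z ≤ 1) {x : ι → ℝ} (hx : ∀ i, 0 ≤ x i) :
    ConcaveOn ℝ (Set.Ici 0) (fun u => 1 - ∏ i, (1 - κ (u * x i))) ∧
      MonotoneOn (fun u => 1 - ∏ i, (1 - κ (u * x i))) (Set.Ici 0) := by
  have hmem : ∀ i, ∀ u ∈ Set.Ici (0:ℝ), u * x i ∈ Set.Ici 0 := fun i u hu => mul_nonneg hu (hx i)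
  have hfactor_conv : ∀ i, ConvexOn ℝ (Set.Ici 0) (fun u => 1 - κ (u * x i)) := fun i =>
    (convexOn_const 1 (convex_Ici 0)).sub <|
      (hκconc.comp_linearMap ((LinearMap.id : ℝ →ₗ[ℝ] ℝ).smulRight (x i))).subset
        (hmem i) (convex_Ici 0)
  have hfactor_anti : ∀ i, AntitoneOn (fun u => 1 - κ (u * x i)) (Set.Ici 0) :=
    fun i u hu v hv huv => sub_le_sub_left
      (hκmono (hmem i u hu) (hmem i v hv) (mul_le_mul_of_nonneg_right huv (hx i))) 1
  obtain ⟨hconv, hanti⟩ := ConvexOn.prod_of_antitoneOn (convex_Ici 0) univ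
    (fun i _ => hfactor_conv i) (fun i _ => hfactor_anti i)
    (fun i _ u hu => sub_nonneg.2 (hκle _ (hmem i u hu)))
  exact ⟨(concaveOn_const 1 (convex_Ici 0)).sub hconv,
    fun u hu v hv huv => sub_le_sub_left (hanti hu hv huv) 1⟩

theorem ConvexOn.exists_add_mul_sub_le {S : Set ℝ} {f : ℝ → ℝ} (hf : ConvexOn ℝ S f) {t : ℝ}
    (ht : t ∈ interior S) : ∃ b, ∀ u ∈ S, f t + b * (u - t) ≤ f u := by
  refine ⟨derivWithin f (Set.Ioi t) t, fun u hu => ?_⟩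
  rcases lt_trichotomy u t with hut | rfl | htu
  · have := (hf.slope_le_leftDeriv_of_mem_interior hu ht hut).trans
      (hf.leftDeriv_le_rightDeriv_of_mem_interior ht)
    rw [slope_def_field, div_le_iff₀ (sub_pos.2 hut)] at this
    linarith
  · simp
  · have := hf.rightDeriv_le_slope_of_mem_interior ht hu htu
    rw [slope_def_field, le_div_iff₀ (sub_pos.2 htu)] at this
    linarith

theorem ConcaveOn.exists_le_add_mul_sub {S : Set ℝ} {f : ℝ → ℝ} (hf : ConcaveOn ℝ S f) {t : ℝ}
    (ht : t ∈ interior S) : ∃ b, ∀ u ∈ S, f u ≤ f t + b * (u - t) := by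
  obtain ⟨b, hb⟩ := hf.neg.exists_add_mul_sub_le ht
  refine ⟨-b, fun u hu => ?_⟩
  have := hb u hu
  simp only [Pi.neg_apply] at this
  linarith

theorem ConcaveOn.exists_nonneg_affine_ge_of_monotoneOn {F : ℝ → ℝ}
    (hFc : ConcaveOn ℝ (Set.Ici 0) F) (hFm : MonotoneOn F (Set.Ici 0)) (hF0 : 0 ≤ F 0)
    {t : ℝ} (ht : 0 < t) :
    ∃ a b, 0 ≤ a ∧ 0 ≤ b ∧ F t = a + b * t ∧ ∀ u ∈ Set.Ici (0:ℝ), F u ≤ a + b * u := by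
  obtain ⟨b, hb⟩ := hFc.exists_le_add_mul_sub (t := t) (by rwa [interior_Ici])
  have hb_nonneg : 0 ≤ b := by
    have ht1 : t + 1 ∈ Set.Ici (0:ℝ) := Set.mem_Ici.2 (by linarith)
    linarith [hb (t + 1) ht1, hFm (Set.mem_Ici.2 ht.le) ht1 (by linarith)]
  refine ⟨F t - b * t, b, ?_, hb_nonneg, by ring, fun u hu => by linarith [hb u hu]⟩
  linarith [hb 0 Set.self_mem_Ici]

theorem ConcaveOn.exists_nonneg_affine_ae_ge_of_monotoneOn {Ω : Type*} [MeasurableSpace Ω]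
    {μ : Measure Ω} {F : ℝ → ℝ} (hFc : ConcaveOn ℝ (Set.Ici 0) F)
    (hFm : MonotoneOn F (Set.Ici 0)) (hF0 : 0 ≤ F 0) {W : Ω → ℝ} (hW0 : ∀ ω, 0 ≤ W ω)
    (hWint : Integrable W μ) {t : ℝ} (hEW : ∫ ω, W ω ∂μ ≤ t) :
    ∃ a b, 0 ≤ a ∧ 0 ≤ b ∧ F t = a + b * t ∧ ∀ᵐ ω ∂μ, F (W ω) ≤ a + b * W ω := by
  rcases lt_or_ge 0 t with ht | ht
  · obtain ⟨a, b, ha, hb, hFt, hle⟩ := hFc.exists_nonneg_affine_ge_of_monotoneOn hFm hF0 ht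
    exact ⟨a, b, ha, hb, hFt, .of_forall fun ω => hle _ (hW0 ω)⟩
  · -- `t = 0` lies on the boundary, where no supporting line need exist; but then `W = 0` a.e.
    have hW : W =ᵐ[μ] 0 := (integral_eq_zero_iff_of_nonneg hW0 hWint).1
      (le_antisymm (hEW.trans ht) (integral_nonneg hW0))
    obtain rfl : t = 0 := le_antisymm ht ((integral_nonneg hW0).trans hEW)
    refine ⟨F 0, 0, hF0, le_rfl, by ring, ?_⟩
    filter_upwards [hW] with ω hω
    simp [hω]

theorem integral_le_affine_mul_affine_of_ae_le {Ω : Type*} [MeasurableSpace Ω] {μ : Measure Ω}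
    [IsProbabilityMeasure μ] {f W V : Ω → ℝ} (hWint : Integrable W μ) (hVint : Integrable V μ)
    (hWVint : Integrable (fun ω => W ω * V ω) μ) {a b c d s t : ℝ} (ha : 0 ≤ a) (hb : 0 ≤ b)
    (hc : 0 ≤ c) (hd : 0 ≤ d) (hEW : ∫ ω, W ω ∂μ ≤ s) (hEV : ∫ ω, V ω ∂μ ≤ t)
    (hEWV : ∫ ω, W ω * V ω ∂μ ≤ s * t) (hf0 : 0 ≤ᵐ[μ] f)
    (hf : ∀ᵐ ω ∂μ, f ω ≤ (a + b * W ω) * (c + d * V ω)) :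
    ∫ ω, f ω ∂μ ≤ (a + b * s) * (c + d * t) := by
  have hexpand : (fun ω => (a + b * W ω) * (c + d * V ω)) =
      fun ω => a * c + a * d * V ω + b * c * W ω + b * d * (W ω * V ω) := by
    ext ω; ring
  have hint₁ : Integrable (fun ω => a * c + a * d * V ω) μ :=
    (integrable_const _).add (hVint.const_mul _)
  have hint₂ : Integrable (fun ω => a * c + a * d * V ω + b * c * W ω) μ :=
    hint₁.add (hWint.const_mul _)
  have hint₃ := hint₂.add (hWVint.const_mul (b * d))
  calc ∫ ω, f ω ∂μ ≤ ∫ ω, (a + b * W ω) * (c + d * V ω) ∂μ :=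
        integral_mono_of_nonneg hf0 (hexpand ▸ hint₃) hf
    _ = a * c + a * d * ∫ ω, V ω ∂μ + b * c * ∫ ω, W ω ∂μ + b * d * ∫ ω, W ω * V ω ∂μ := by
        rw [hexpand, integral_add hint₂ (hWVint.const_mul _), integral_add hint₁ (hWint.const_mul _),
          integral_add (integrable_const _) (hVint.const_mul _), integral_const, integral_const_mul,
          integral_const_mul, integral_const_mul, probReal_univ, one_smul]
    _ ≤ (a + b * s) * (c + d * t) := by
        nlinarith [mul_le_mul_of_nonneg_left hEV (mul_nonneg ha hd),
          mul_le_mul_of_nonneg_left hEW (mul_nonneg hb hc),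
          mul_le_mul_of_nonneg_left hEWV (mul_nonneg hb hd)]

theorem integral_comp_mul_comp_le_of_concaveOn {Ω : Type*} [MeasurableSpace Ω] {μ : Measure Ω}
    [IsProbabilityMeasure μ] {F G : ℝ → ℝ} (hFc : ConcaveOn ℝ (Set.Ici 0) F)
    (hFm : MonotoneOn F (Set.Ici 0)) (hF0 : 0 ≤ F 0) (hGc : ConcaveOn ℝ (Set.Ici 0) G)
    (hGm : MonotoneOn G (Set.Ici 0)) (hG0 : 0 ≤ G 0) {W V : Ω → ℝ} (hW0 : ∀ ω, 0 ≤ W ω)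
    (hV0 : ∀ ω, 0 ≤ V ω) (hWint : Integrable W μ) (hVint : Integrable V μ)
    (hWVint : Integrable (fun ω => W ω * V ω) μ) {s t : ℝ} (hEW : ∫ ω, W ω ∂μ ≤ s)
    (hEV : ∫ ω, V ω ∂μ ≤ t) (hEWV : ∫ ω, W ω * V ω ∂μ ≤ s * t) :
    ∫ ω, F (W ω) * G (V ω) ∂μ ≤ F s * G t := by
  obtain ⟨a, b, ha, hb, hFs, hFW⟩ :=
    hFc.exists_nonneg_affine_ae_ge_of_monotoneOn hFm hF0 hW0 hWint hEW
  obtain ⟨c, d, hc, hd, hGt, hGV⟩ :=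
    hGc.exists_nonneg_affine_ae_ge_of_monotoneOn hGm hG0 hV0 hVint hEV
  have hF_nonneg : ∀ ω, 0 ≤ F (W ω) := fun ω => hF0.trans (hFm Set.self_mem_Ici (hW0 ω) (hW0 ω))
  have hG_nonneg : ∀ ω, 0 ≤ G (V ω) := fun ω => hG0.trans (hGm Set.self_mem_Ici (hV0 ω) (hV0 ω))
  rw [hFs, hGt]
  refine integral_le_affine_mul_affine_of_ae_le hWint hVint hWVint ha hb hc hd hEW hEV hEWV
    (.of_forall fun ω => mul_nonneg (hF_nonneg ω) (hG_nonneg ω)) ?_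
  filter_upwards [hFW, hGV] with ω hFω hGω
  exact mul_le_mul hFω hGω (hG_nonneg ω) (add_nonneg ha (mul_nonneg hb (hW0 ω)))

theorem bond_percolation_zero_function_bound_general
    {Ω : Type*} [MeasurableSpace Ω] (μ : Measure Ω) [IsProbabilityMeasure μ]
    (κ : ℝ → ℝ)
    (hκmono : MonotoneOn κ (Set.Ici 0))
    (hκconc : ConcaveOn ℝ (Set.Ici 0) κ)
    (hκval : ∀ z ∈ Set.Ici (0:ℝ), κ z ∈ Set.Icc (0:ℝ) 1)
    (W Wbar : Ω → ℝ) (hW0 : ∀ ω, 0 ≤ W ω) (hWbar0 : ∀ ω, 0 ≤ Wbar ω)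
    (hWint : Integrable W μ) (hWbarint : Integrable Wbar μ)
    (hWWint : Integrable (fun ω => W ω * Wbar ω) μ)
    (Wstar Wbarstar : ℝ)
    (hEW : ∫ ω, W ω ∂μ ≤ Wstar) (hEWbar : ∫ ω, Wbar ω ∂μ ≤ Wbarstar)
    (hEWW : ∫ ω, W ω * Wbar ω ∂μ ≤ Wstar * Wbarstar)
    (n m : ℕ)
    (x : Fin n → ℝ) (y : Fin m → ℝ) (hx : ∀ i, 0 ≤ x i) (hy : ∀ j, 0 ≤ y j) :
    ∫ ω, (1 - ∏ i, (1 - κ (W ω * x i))) * (1 - ∏ j, (1 - κ (Wbar ω * y j))) ∂μ ≤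
      (1 - ∏ i, (1 - κ (Wstar * x i))) * (1 - ∏ j, (1 - κ (Wbarstar * y j))) := by
  have hκle : ∀ z ∈ Set.Ici (0:ℝ), κ z ≤ 1 := fun z hz => (hκval z hz).2
  have hκ0 := hκval 0 Set.self_mem_Ici
  have hF0 : ∀ k, 0 ≤ 1 - (1 - κ 0) ^ k := fun k =>
    sub_nonneg.2 (pow_le_one₀ (by linarith [hκ0.2]) (by linarith [hκ0.1]))
  obtain ⟨hFc, hFm⟩ := concaveOn_and_monotoneOn_one_sub_prod_one_sub hκmono hκconc hκle hx
  obtain ⟨hGc, hGm⟩ := concaveOn_and_monotoneOn_one_sub_prod_one_sub hκmono hκconc hκle hy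
  exact integral_comp_mul_comp_le_of_concaveOn hFc hFm (by simpa using hF0 n) hGc hGm
    (by simpa using hF0 m) hW0 hWbar0 hWint hWbarint hWWint hEW hEWbar hEWW

theorem bond_percolation_zero_function_bound
    {Ω : Type*} [MeasurableSpace Ω] (μ : Measure Ω) [IsProbabilityMeasure μ]
    (κ : ℝ → ℝ)
    (hκmono : MonotoneOn κ (Set.Ici 0))
    (hκconc : ConcaveOn ℝ (Set.Ici 0) κ)
    (hκval : ∀ z ∈ Set.Ici (0:ℝ), κ z ∈ Set.Icc (0:ℝ) 1)
    (W Wbar : Ω → ℝ) (hW0 : ∀ ω, 0 ≤ W ω) (hWbar0 : ∀ ω, 0 ≤ Wbar ω)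
    (hWint : Integrable W μ) (hWbarint : Integrable Wbar μ)
    (hWWint : Integrable (fun ω => W ω * Wbar ω) μ)
    (Wstar Wbarstar : ℝ) (hWs : 0 ≤ Wstar) (hWbs : 0 ≤ Wbarstar)
    (hEW : ∫ ω, W ω ∂μ ≤ Wstar) (hEWbar : ∫ ω, Wbar ω ∂μ ≤ Wbarstar)
    (hEWW : ∫ ω, W ω * Wbar ω ∂μ ≤ Wstar * Wbarstar)
    (n m : ℕ) (hn : 1 ≤ n) (hm : 1 ≤ m)
    (x : Fin n → ℝ) (y : Fin m → ℝ) (hx : ∀ i, 0 ≤ x i) (hy : ∀ j, 0 ≤ y j)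
    (hint : Integrable (fun ω =>
      (1 - ∏ i, (1 - κ (W ω * x i))) * (1 - ∏ j, (1 - κ (Wbar ω * y j)))) μ) :
    ∫ ω, (1 - ∏ i, (1 - κ (W ω * x i))) * (1 - ∏ j, (1 - κ (Wbar ω * y j))) ∂μ ≤
      (1 - ∏ i, (1 - κ (Wstar * x i))) * (1 - ∏ j, (1 - κ (Wbarstar * y j))) :=
  bond_percolation_zero_function_bound_general μ κ hκmono hκconc hκval W Wbar hW0 hWbar0 hWint
    hWbarint hWWint Wstar Wbarstar hEW hEWbar hEWW n m x y hx hy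
end
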